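/- arXiv:nlin/0310012 — 2 statements merged into one kernel-verified Lean document; each statement's English description precedes it below -/
import Mathlib

section
/- Let P be a Poisson bivector on ℝⁿ and τ a smooth vector field on ℝⁿ. Then L_τ(P) is a Poisson bivector — and in that case it is automatically compatible with P, i.e. [L_τ(P), P] = 0 — if and only if [L_τ²(P), P] = 0. -/
open Matrix BigOperators

noncomputable section

/-- Partial derivative of a scalar function on ℝⁿ in the `k`-th coordinate direction. -/
def pd {n : ℕ} (k : Fin n) (f : (Fin n → ℝ) → ℝ) (x : Fin n → ℝ) : ℝ :=
  fderiv ℝ f x (Pi.single k 1)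

/-- A (smooth) bivector on ℝⁿ: a smooth field of antisymmetric matrices. -/
def IsBivector {n : ℕ} (P : (Fin n → ℝ) → Matrix (Fin n) (Fin n) ℝ) : Prop :=
  (∀ i j, ContDiff ℝ (⊤ : ℕ∞) fun x => P x i j) ∧ ∀ x, (P x)ᵀ = -P x

/-- A smooth vector field on ℝⁿ. -/
def IsVectorField {n : ℕ} (τ : (Fin n → ℝ) → (Fin n → ℝ)) : Prop :=
  ∀ i, ContDiff ℝ (⊤ : ℕ∞) fun x => τ x i

/-- Components of the Schouten bracket of two bivectors:
`[H,K]^{ijk} = -∑ₘ (K^{mk} ∂ₘH^{ij} + H^{mk} ∂ₘK^{ij} + cyclic permutations of (i,j,k))`. -/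
def schouten {n : ℕ} (H K : (Fin n → ℝ) → Matrix (Fin n) (Fin n) ℝ)
    (x : Fin n → ℝ) (i j k : Fin n) : ℝ :=
  -∑ m, (K x m k * pd m (fun y => H y i j) x + H x m k * pd m (fun y => K y i j) x
       + K x m i * pd m (fun y => H y j k) x + H x m i * pd m (fun y => K y j k) x
       + K x m j * pd m (fun y => H y k i) x + H x m j * pd m (fun y => K y k i) x)

/-- Lie derivative of a bivector along a vector field:
`(L_τ P)^{ij} = ∑ₖ (τ^k ∂ₖP^{ij} - P^{kj} ∂ₖτ^i - P^{ik} ∂ₖτ^j)`. -/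
def lieD {n : ℕ} (τ : (Fin n → ℝ) → (Fin n → ℝ))
    (P : (Fin n → ℝ) → Matrix (Fin n) (Fin n) ℝ)
    (x : Fin n → ℝ) : Matrix (Fin n) (Fin n) ℝ :=
  Matrix.of fun i j => ∑ k, (τ x k * pd k (fun y => P y i j) x
    - P x k j * pd k (fun y => τ y i) x - P x i k * pd k (fun y => τ y j) x)

/-- A Poisson bivector: a bivector whose Schouten bracket with itself vanishes. -/
def IsPoisson {n : ℕ} (P : (Fin n → ℝ) → Matrix (Fin n) (Fin n) ℝ) : Prop :=
  IsBivector P ∧ ∀ x i j k, schouten P P x i j k = 0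

/-- Two bivectors are compatible if their Schouten bracket vanishes. -/
def Compatible {n : ℕ} (P Q : (Fin n → ℝ) → Matrix (Fin n) (Fin n) ℝ) : Prop :=
  ∀ x i j k, schouten P Q x i j k = 0


-- ===== Auxiliary lemmas =====

variable {n : ℕ}

lemma contDiff_pd (k : Fin n) (f : (Fin n → ℝ) → ℝ) (hf : ContDiff ℝ (⊤:ℕ∞) f) :
    ContDiff ℝ (⊤:ℕ∞) (pd k f) :=
  (hf.fderiv_right (m := (⊤:ℕ∞)) (by exact_mod_cast le_top)).clm_apply contDiff_const

lemma dAt {f : (Fin n → ℝ) → ℝ} (hf : ContDiff ℝ (⊤:ℕ∞) f) (x : Fin n → ℝ) :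
    DifferentiableAt ℝ f x := (hf.differentiable (by simp)).differentiableAt

lemma pd_neg (m : Fin n) (f : (Fin n → ℝ) → ℝ) (x : Fin n → ℝ) :
    pd m (fun y => -f y) x = -pd m f x := by
  simp [pd, fderiv_neg]

lemma pd_zero (m : Fin n) (x : Fin n → ℝ) : pd m (fun _ => (0:ℝ)) x = 0 := by
  simp [pd]

lemma pd_add' (m : Fin n) {f g : (Fin n → ℝ) → ℝ} (x : Fin n → ℝ)
    (hf : ContDiff ℝ (⊤:ℕ∞) f) (hg : ContDiff ℝ (⊤:ℕ∞) g) :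
    pd m (fun y => f y + g y) x = pd m f x + pd m g x := by
  simp [pd, fderiv_fun_add (dAt hf x) (dAt hg x)]

lemma pd_sub' (m : Fin n) {f g : (Fin n → ℝ) → ℝ} (x : Fin n → ℝ)
    (hf : ContDiff ℝ (⊤:ℕ∞) f) (hg : ContDiff ℝ (⊤:ℕ∞) g) :
    pd m (fun y => f y - g y) x = pd m f x - pd m g x := by
  simp [pd, fderiv_fun_sub (dAt hf x) (dAt hg x)]

lemma pd_mul' (m : Fin n) {f g : (Fin n → ℝ) → ℝ} (x : Fin n → ℝ)
    (hf : ContDiff ℝ (⊤:ℕ∞) f) (hg : ContDiff ℝ (⊤:ℕ∞) g) :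
    pd m (fun y => f y * g y) x = pd m f x * g x + f x * pd m g x := by
  simp [pd, fderiv_fun_mul (dAt hf x) (dAt hg x)]; ring

lemma pd_sum' (m : Fin n) {f : Fin n → (Fin n → ℝ) → ℝ} (x : Fin n → ℝ)
    (hf : ∀ l, ContDiff ℝ (⊤:ℕ∞) (f l)) :
    pd m (fun y => ∑ l, f l y) x = ∑ l, pd m (f l) x := by
  simp [pd, fderiv_fun_sum (fun l _ => dAt (hf l) x)]

lemma pd_pd (m l : Fin n) (f : (Fin n → ℝ) → ℝ) (hf : ContDiff ℝ (⊤:ℕ∞) f) (x : Fin n → ℝ) :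
    pd m (fun y => pd l f y) x = fderiv ℝ (fderiv ℝ f) x (Pi.single m 1) (Pi.single l 1) := by
  have hF : ContDiff ℝ (⊤:ℕ∞) (fderiv ℝ f) := hf.fderiv_right (m := (⊤:ℕ∞)) (by exact_mod_cast le_top)
  have h1 : (fun y => pd l f y) = fun y => (fderiv ℝ f y) (Pi.single l 1) := rfl
  rw [pd, h1, fderiv_clm_apply (hF.differentiable (by simp) x)
    (differentiableAt_const _)]
  simp

lemma pd_comm (m l : Fin n) (f : (Fin n → ℝ) → ℝ) (hf : ContDiff ℝ (⊤:ℕ∞) f) (x : Fin n → ℝ) :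
    pd m (fun y => pd l f y) x = pd l (fun y => pd m f y) x := by
  rw [pd_pd m l f hf, pd_pd l m f hf]
  exact second_derivative_symmetric
    (fun y => (hf.differentiable (by simp) y).hasFDerivAt)
    (((hf.fderiv_right (m := (⊤:ℕ∞)) (by exact_mod_cast le_top)).differentiable
      (by simp) x).hasFDerivAt) _ _

lemma contDiff_lieD {τ : (Fin n → ℝ) → (Fin n → ℝ)} {P : (Fin n → ℝ) → Matrix (Fin n) (Fin n) ℝ}
    (hτ : ∀ i, ContDiff ℝ (⊤:ℕ∞) fun x => τ x i) (hP : ∀ i j, ContDiff ℝ (⊤:ℕ∞) fun x => P x i j)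
    (a b : Fin n) : ContDiff ℝ (⊤:ℕ∞) (fun x => lieD τ P x a b) := by
  have h1 : (fun x => lieD τ P x a b) = fun x => ∑ l, (τ x l * pd l (fun z => P z a b) x
      - P x l b * pd l (fun z => τ z a) x - P x a l * pd l (fun z => τ z b) x) := rfl
  rw [h1]
  exact ContDiff.sum fun l _ => (((hτ l).mul (contDiff_pd l _ (hP a b))).sub
    ((hP l b).mul (contDiff_pd l _ (hτ a)))).sub ((hP a l).mul (contDiff_pd l _ (hτ b)))

lemma lieD_antisym {τ : (Fin n → ℝ) → (Fin n → ℝ)} {P : (Fin n → ℝ) → Matrix (Fin n) (Fin n) ℝ}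
    (hPa : ∀ x, (P x)ᵀ = -P x) : ∀ x, (lieD τ P x)ᵀ = -(lieD τ P x) := by
  have hP' : ∀ y c d, P y c d = -P y d c := fun y c d => by
    have h := congrFun (congrFun (hPa y) d) c
    simpa using h
  intro x
  ext a b
  simp only [Matrix.transpose_apply, Matrix.neg_apply]
  show (∑ l, (τ x l * pd l (fun z => P z b a) x - P x l a * pd l (fun z => τ z b) x
      - P x b l * pd l (fun z => τ z a) x))
    = -(∑ l, (τ x l * pd l (fun z => P z a b) x - P x l b * pd l (fun z => τ z a) x
      - P x a l * pd l (fun z => τ z b) x))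
  rw [← Finset.sum_neg_distrib]
  refine Finset.sum_congr rfl fun l _ => ?_
  rw [show (fun z => P z b a) = fun z => -(P z a b) from funext fun z => hP' z b a, pd_neg,
    hP' x l a, hP' x b l]
  ring

lemma schouten_comm (H K : (Fin n → ℝ) → Matrix (Fin n) (Fin n) ℝ) (x : Fin n → ℝ)
    (i j k : Fin n) : schouten H K x i j k = schouten K H x i j k := by
  unfold schouten
  exact congrArg Neg.neg (Finset.sum_congr rfl fun m _ => by ring)

lemma sum_sum_antisym (F : Fin n → Fin n → ℝ) (h : ∀ m l, F m l + F l m = 0) :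
    ∑ m, ∑ l, F m l = 0 := by
  have h2 : (∑ m, ∑ l, F m l) + (∑ m, ∑ l, F l m) = 0 := by
    rw [← Finset.sum_add_distrib]
    simp only [← Finset.sum_add_distrib]
    simp [h]
  have h3 : ∑ m, ∑ l, F l m = ∑ m, ∑ l, F m l := Finset.sum_comm
  linarith

lemma pd_lieD {τ : (Fin n → ℝ) → (Fin n → ℝ)} {P : (Fin n → ℝ) → Matrix (Fin n) (Fin n) ℝ}
    (hτ : ∀ i, ContDiff ℝ (⊤:ℕ∞) fun x => τ x i) (hP : ∀ i j, ContDiff ℝ (⊤:ℕ∞) fun x => P x i j)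
    (m a b : Fin n) (x : Fin n → ℝ) :
    pd m (fun y => lieD τ P y a b) x = ∑ l,
      (pd m (fun y => τ y l) x * pd l (fun y => P y a b) x
       + τ x l * pd m (fun y => pd l (fun z => P z a b) y) x
       - pd m (fun y => P y l b) x * pd l (fun y => τ y a) x
       - P x l b * pd m (fun y => pd l (fun z => τ z a) y) x
       - pd m (fun y => P y a l) x * pd l (fun y => τ y b) x
       - P x a l * pd m (fun y => pd l (fun z => τ z b) y) x) := by
  have h1 : (fun y => lieD τ P y a b) = fun y => ∑ l, (τ y l * pd l (fun z => P z a b) y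
      - P y l b * pd l (fun z => τ z a) y - P y a l * pd l (fun z => τ z b) y) := rfl
  rw [h1, pd_sum' m x (fun l => (((hτ l).mul (contDiff_pd l _ (hP a b))).sub
    ((hP l b).mul (contDiff_pd l _ (hτ a)))).sub ((hP a l).mul (contDiff_pd l _ (hτ b))))]
  refine Finset.sum_congr rfl fun l _ => ?_
  rw [pd_sub' m x (((hτ l).mul (contDiff_pd l _ (hP a b))).sub
        ((hP l b).mul (contDiff_pd l _ (hτ a)))) ((hP a l).mul (contDiff_pd l _ (hτ b))),
      pd_sub' m x ((hτ l).mul (contDiff_pd l _ (hP a b))) ((hP l b).mul (contDiff_pd l _ (hτ a))),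
      pd_mul' m x (hτ l) (contDiff_pd l _ (hP a b)),
      pd_mul' m x (hP l b) (contDiff_pd l _ (hτ a)),
      pd_mul' m x (hP a l) (contDiff_pd l _ (hτ b))]
  ring

lemma pd_schouten {H K : (Fin n → ℝ) → Matrix (Fin n) (Fin n) ℝ}
    (hH : ∀ i j, ContDiff ℝ (⊤:ℕ∞) fun x => H x i j)
    (hK : ∀ i j, ContDiff ℝ (⊤:ℕ∞) fun x => K x i j)
    (m i j k : Fin n) (x : Fin n → ℝ) :
    pd m (fun y => schouten H K y i j k) x = -∑ l,
      (pd m (fun y => K y l k) x * pd l (fun y => H y i j) x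
       + K x l k * pd m (fun y => pd l (fun z => H z i j) y) x
       + pd m (fun y => H y l k) x * pd l (fun y => K y i j) x
       + H x l k * pd m (fun y => pd l (fun z => K z i j) y) x
       + pd m (fun y => K y l i) x * pd l (fun y => H y j k) x
       + K x l i * pd m (fun y => pd l (fun z => H z j k) y) x
       + pd m (fun y => H y l i) x * pd l (fun y => K y j k) x
       + H x l i * pd m (fun y => pd l (fun z => K z j k) y) x
       + pd m (fun y => K y l j) x * pd l (fun y => H y k i) x
       + K x l j * pd m (fun y => pd l (fun z => H z k i) y) x
       + pd m (fun y => H y l j) x * pd l (fun y => K y k i) x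
       + H x l j * pd m (fun y => pd l (fun z => K z k i) y) x) := by
  have h1 : (fun y => schouten H K y i j k) = fun y => -∑ l,
      (K y l k * pd l (fun z => H z i j) y + H y l k * pd l (fun z => K z i j) y
       + K y l i * pd l (fun z => H z j k) y + H y l i * pd l (fun z => K z j k) y
       + K y l j * pd l (fun z => H z k i) y + H y l j * pd l (fun z => K z k i) y) := rfl
  have hsm : ∀ l : Fin n, ContDiff ℝ (⊤:ℕ∞) (fun y =>
      K y l k * pd l (fun z => H z i j) y + H y l k * pd l (fun z => K z i j) y
       + K y l i * pd l (fun z => H z j k) y + H y l i * pd l (fun z => K z j k) y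
       + K y l j * pd l (fun z => H z k i) y + H y l j * pd l (fun z => K z k i) y) := fun l =>
    (((((((hK l k).mul (contDiff_pd l _ (hH i j))).add ((hH l k).mul (contDiff_pd l _ (hK i j)))).add
      ((hK l i).mul (contDiff_pd l _ (hH j k)))).add ((hH l i).mul (contDiff_pd l _ (hK j k)))).add
      ((hK l j).mul (contDiff_pd l _ (hH k i)))).add ((hH l j).mul (contDiff_pd l _ (hK k i))))
  rw [h1, pd_neg, pd_sum' m x hsm]
  refine congrArg Neg.neg (Finset.sum_congr rfl fun l _ => ?_)
  rw [pd_add' m x ((((((hK l k).mul (contDiff_pd l _ (hH i j))).add ((hH l k).mul (contDiff_pd l _ (hK i j)))).add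
        ((hK l i).mul (contDiff_pd l _ (hH j k)))).add ((hH l i).mul (contDiff_pd l _ (hK j k)))).add
        ((hK l j).mul (contDiff_pd l _ (hH k i)))) ((hH l j).mul (contDiff_pd l _ (hK k i))),
      pd_add' m x (((((hK l k).mul (contDiff_pd l _ (hH i j))).add ((hH l k).mul (contDiff_pd l _ (hK i j)))).add
        ((hK l i).mul (contDiff_pd l _ (hH j k)))).add ((hH l i).mul (contDiff_pd l _ (hK j k))))
        ((hK l j).mul (contDiff_pd l _ (hH k i))),
      pd_add' m x ((((hK l k).mul (contDiff_pd l _ (hH i j))).add ((hH l k).mul (contDiff_pd l _ (hK i j)))).add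
        ((hK l i).mul (contDiff_pd l _ (hH j k)))) ((hH l i).mul (contDiff_pd l _ (hK j k))),
      pd_add' m x (((hK l k).mul (contDiff_pd l _ (hH i j))).add ((hH l k).mul (contDiff_pd l _ (hK i j))))
        ((hK l i).mul (contDiff_pd l _ (hH j k))),
      pd_add' m x ((hK l k).mul (contDiff_pd l _ (hH i j))) ((hH l k).mul (contDiff_pd l _ (hK i j))),
      pd_mul' m x (hK l k) (contDiff_pd l _ (hH i j)),
      pd_mul' m x (hH l k) (contDiff_pd l _ (hK i j)),
      pd_mul' m x (hK l i) (contDiff_pd l _ (hH j k)),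
      pd_mul' m x (hH l i) (contDiff_pd l _ (hK j k)),
      pd_mul' m x (hK l j) (contDiff_pd l _ (hH k i)),
      pd_mul' m x (hH l j) (contDiff_pd l _ (hK k i))]
  ring

lemma keyPoint (H K : (Fin n → ℝ) → Matrix (Fin n) (Fin n) ℝ)
    (τ : (Fin n → ℝ) → (Fin n → ℝ)) (x : Fin n → ℝ)
    (hH : ∀ a b, H x a b = -H x b a) (hK : ∀ a b, K x a b = -K x b a)
    (hdH : ∀ m a b, pd m (fun y => H y a b) x = -pd m (fun y => H y b a) x)
    (hdK : ∀ m a b, pd m (fun y => K y a b) x = -pd m (fun y => K y b a) x)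
    (hd2H : ∀ m l a b, pd m (fun y => pd l (fun z => H z a b) y) x
      = -pd m (fun y => pd l (fun z => H z b a) y) x)
    (hd2K : ∀ m l a b, pd m (fun y => pd l (fun z => K z a b) y) x
      = -pd m (fun y => pd l (fun z => K z b a) y) x)
    (hcH : ∀ m l a b, pd m (fun y => pd l (fun z => H z a b) y) x
      = pd l (fun y => pd m (fun z => H z a b) y) x)
    (hcK : ∀ m l a b, pd m (fun y => pd l (fun z => K z a b) y) x
      = pd l (fun y => pd m (fun z => K z a b) y) x)
    (hct : ∀ m l a, pd m (fun y => pd l (fun z => τ z a) y) x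
      = pd l (fun y => pd m (fun z => τ z a) y) x)
    (i j k m l : Fin n) :
    ((H x i l * K x m k * pd m (fun y => pd l (fun z => τ z j) y) x
      + H x j l * K x m i * pd m (fun y => pd l (fun z => τ z k) y) x
      + H x k l * K x m j * pd m (fun y => pd l (fun z => τ z i) y) x
      + H x l i * K x m j * pd m (fun y => pd l (fun z => τ z k) y) x
      + H x l i * pd m (fun y => K y j k) x * pd l (fun y => τ y m) x
      + H x l j * K x m k * pd m (fun y => pd l (fun z => τ z i) y) x
      + H x l j * pd m (fun y => K y k i) x * pd l (fun y => τ y m) x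
      + H x l k * K x m i * pd m (fun y => pd l (fun z => τ z j) y) x
      + H x l k * pd m (fun y => K y i j) x * pd l (fun y => τ y m) x
      + H x m l * pd m (fun y => K y i j) x * pd l (fun y => τ y k) x
      + H x m l * pd m (fun y => K y j k) x * pd l (fun y => τ y i) x
      + H x m l * pd m (fun y => K y k i) x * pd l (fun y => τ y j) x
      - K x m i * τ x l * pd m (fun y => pd l (fun z => H z j k) y) x
      - K x m i * pd l (fun y => H y j k) x * pd m (fun y => τ y l) x
      + K x m i * pd m (fun y => H y j l) x * pd l (fun y => τ y k) x
      + K x m i * pd m (fun y => H y l k) x * pd l (fun y => τ y j) x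
      - K x m j * τ x l * pd m (fun y => pd l (fun z => H z k i) y) x
      - K x m j * pd l (fun y => H y k i) x * pd m (fun y => τ y l) x
      + K x m j * pd m (fun y => H y k l) x * pd l (fun y => τ y i) x
      + K x m j * pd m (fun y => H y l i) x * pd l (fun y => τ y k) x
      - K x m k * τ x l * pd m (fun y => pd l (fun z => H z i j) y) x
      - K x m k * pd l (fun y => H y i j) x * pd m (fun y => τ y l) x
      + K x m k * pd m (fun y => H y i l) x * pd l (fun y => τ y j) x
      + K x m k * pd m (fun y => H y l j) x * pd l (fun y => τ y i) x
      - τ x l * pd l (fun y => H y m i) x * pd m (fun y => K y j k) x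
      - τ x l * pd l (fun y => H y m j) x * pd m (fun y => K y k i) x
      - τ x l * pd l (fun y => H y m k) x * pd m (fun y => K y i j) x)
     + (H x m i * K x j l * pd m (fun y => pd l (fun z => τ z k) y) x
      + H x m i * K x l k * pd m (fun y => pd l (fun z => τ z j) y) x
      - H x m i * τ x l * pd m (fun y => pd l (fun z => K z j k) y) x
      - H x m i * pd l (fun y => K y j k) x * pd m (fun y => τ y l) x
      + H x m i * pd m (fun y => K y j l) x * pd l (fun y => τ y k) x
      + H x m i * pd m (fun y => K y l k) x * pd l (fun y => τ y j) x
      + H x m j * K x k l * pd m (fun y => pd l (fun z => τ z i) y) x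
      + H x m j * K x l i * pd m (fun y => pd l (fun z => τ z k) y) x
      - H x m j * τ x l * pd m (fun y => pd l (fun z => K z k i) y) x
      - H x m j * pd l (fun y => K y k i) x * pd m (fun y => τ y l) x
      + H x m j * pd m (fun y => K y k l) x * pd l (fun y => τ y i) x
      + H x m j * pd m (fun y => K y l i) x * pd l (fun y => τ y k) x
      + H x m k * K x i l * pd m (fun y => pd l (fun z => τ z j) y) x
      + H x m k * K x l j * pd m (fun y => pd l (fun z => τ z i) y) x
      - H x m k * τ x l * pd m (fun y => pd l (fun z => K z i j) y) x
      - H x m k * pd l (fun y => K y i j) x * pd m (fun y => τ y l) x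
      + H x m k * pd m (fun y => K y i l) x * pd l (fun y => τ y j) x
      + H x m k * pd m (fun y => K y l j) x * pd l (fun y => τ y i) x
      + K x l i * pd m (fun y => H y j k) x * pd l (fun y => τ y m) x
      + K x l j * pd m (fun y => H y k i) x * pd l (fun y => τ y m) x
      + K x l k * pd m (fun y => H y i j) x * pd l (fun y => τ y m) x
      + K x m l * pd m (fun y => H y i j) x * pd l (fun y => τ y k) x
      + K x m l * pd m (fun y => H y j k) x * pd l (fun y => τ y i) x
      + K x m l * pd m (fun y => H y k i) x * pd l (fun y => τ y j) x
      - τ x l * pd m (fun y => H y i j) x * pd l (fun y => K y m k) x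
      - τ x l * pd m (fun y => H y j k) x * pd l (fun y => K y m i) x
      - τ x l * pd m (fun y => H y k i) x * pd l (fun y => K y m j) x)
     - (-H x l i * τ x m * pd m (fun y => pd l (fun z => K z j k) y) x
      + H x l i * pd l (fun y => K y j m) x * pd m (fun y => τ y k) x
      + H x l i * pd l (fun y => K y m k) x * pd m (fun y => τ y j) x
      - H x l j * τ x m * pd m (fun y => pd l (fun z => K z k i) y) x
      + H x l j * pd l (fun y => K y k m) x * pd m (fun y => τ y i) x
      + H x l j * pd l (fun y => K y m i) x * pd m (fun y => τ y k) x
      - H x l k * τ x m * pd m (fun y => pd l (fun z => K z i j) y) x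
      + H x l k * pd l (fun y => K y i m) x * pd m (fun y => τ y j) x
      + H x l k * pd l (fun y => K y m j) x * pd m (fun y => τ y i) x
      + H x l m * pd l (fun y => K y i j) x * pd m (fun y => τ y k) x
      + H x l m * pd l (fun y => K y j k) x * pd m (fun y => τ y i) x
      + H x l m * pd l (fun y => K y k i) x * pd m (fun y => τ y j) x
      - K x l i * τ x m * pd m (fun y => pd l (fun z => H z j k) y) x
      + K x l i * pd l (fun y => H y j m) x * pd m (fun y => τ y k) x
      + K x l i * pd l (fun y => H y m k) x * pd m (fun y => τ y j) x
      - K x l j * τ x m * pd m (fun y => pd l (fun z => H z k i) y) x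
      + K x l j * pd l (fun y => H y k m) x * pd m (fun y => τ y i) x
      + K x l j * pd l (fun y => H y m i) x * pd m (fun y => τ y k) x
      - K x l k * τ x m * pd m (fun y => pd l (fun z => H z i j) y) x
      + K x l k * pd l (fun y => H y i m) x * pd m (fun y => τ y j) x
      + K x l k * pd l (fun y => H y m j) x * pd m (fun y => τ y i) x
      + K x l m * pd l (fun y => H y i j) x * pd m (fun y => τ y k) x
      + K x l m * pd l (fun y => H y j k) x * pd m (fun y => τ y i) x
      + K x l m * pd l (fun y => H y k i) x * pd m (fun y => τ y j) x
      - τ x m * pd l (fun y => H y i j) x * pd m (fun y => K y l k) x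
      - τ x m * pd l (fun y => H y j k) x * pd m (fun y => K y l i) x
      - τ x m * pd l (fun y => H y k i) x * pd m (fun y => K y l j) x
      - τ x m * pd m (fun y => H y l i) x * pd l (fun y => K y j k) x
      - τ x m * pd m (fun y => H y l j) x * pd l (fun y => K y k i) x
      - τ x m * pd m (fun y => H y l k) x * pd l (fun y => K y i j) x))
    + ((H x i m * K x l k * pd l (fun y => pd m (fun z => τ z j) y) x
      + H x j m * K x l i * pd l (fun y => pd m (fun z => τ z k) y) x
      + H x k m * K x l j * pd l (fun y => pd m (fun z => τ z i) y) x
      + H x l m * pd l (fun y => K y i j) x * pd m (fun y => τ y k) x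
      + H x l m * pd l (fun y => K y j k) x * pd m (fun y => τ y i) x
      + H x l m * pd l (fun y => K y k i) x * pd m (fun y => τ y j) x
      + H x m i * K x l j * pd l (fun y => pd m (fun z => τ z k) y) x
      + H x m i * pd l (fun y => K y j k) x * pd m (fun y => τ y l) x
      + H x m j * K x l k * pd l (fun y => pd m (fun z => τ z i) y) x
      + H x m j * pd l (fun y => K y k i) x * pd m (fun y => τ y l) x
      + H x m k * K x l i * pd l (fun y => pd m (fun z => τ z j) y) x
      + H x m k * pd l (fun y => K y i j) x * pd m (fun y => τ y l) x
      - K x l i * τ x m * pd l (fun y => pd m (fun z => H z j k) y) x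
      + K x l i * pd l (fun y => H y j m) x * pd m (fun y => τ y k) x
      + K x l i * pd l (fun y => H y m k) x * pd m (fun y => τ y j) x
      - K x l i * pd m (fun y => H y j k) x * pd l (fun y => τ y m) x
      - K x l j * τ x m * pd l (fun y => pd m (fun z => H z k i) y) x
      + K x l j * pd l (fun y => H y k m) x * pd m (fun y => τ y i) x
      + K x l j * pd l (fun y => H y m i) x * pd m (fun y => τ y k) x
      - K x l j * pd m (fun y => H y k i) x * pd l (fun y => τ y m) x
      - K x l k * τ x m * pd l (fun y => pd m (fun z => H z i j) y) x
      + K x l k * pd l (fun y => H y i m) x * pd m (fun y => τ y j) x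
      + K x l k * pd l (fun y => H y m j) x * pd m (fun y => τ y i) x
      - K x l k * pd m (fun y => H y i j) x * pd l (fun y => τ y m) x
      - τ x m * pd m (fun y => H y l i) x * pd l (fun y => K y j k) x
      - τ x m * pd m (fun y => H y l j) x * pd l (fun y => K y k i) x
      - τ x m * pd m (fun y => H y l k) x * pd l (fun y => K y i j) x)
     + (H x l i * K x j m * pd l (fun y => pd m (fun z => τ z k) y) x
      + H x l i * K x m k * pd l (fun y => pd m (fun z => τ z j) y) x
      - H x l i * τ x m * pd l (fun y => pd m (fun z => K z j k) y) x
      + H x l i * pd l (fun y => K y j m) x * pd m (fun y => τ y k) x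
      + H x l i * pd l (fun y => K y m k) x * pd m (fun y => τ y j) x
      - H x l i * pd m (fun y => K y j k) x * pd l (fun y => τ y m) x
      + H x l j * K x k m * pd l (fun y => pd m (fun z => τ z i) y) x
      + H x l j * K x m i * pd l (fun y => pd m (fun z => τ z k) y) x
      - H x l j * τ x m * pd l (fun y => pd m (fun z => K z k i) y) x
      + H x l j * pd l (fun y => K y k m) x * pd m (fun y => τ y i) x
      + H x l j * pd l (fun y => K y m i) x * pd m (fun y => τ y k) x
      - H x l j * pd m (fun y => K y k i) x * pd l (fun y => τ y m) x
      + H x l k * K x i m * pd l (fun y => pd m (fun z => τ z j) y) x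
      + H x l k * K x m j * pd l (fun y => pd m (fun z => τ z i) y) x
      - H x l k * τ x m * pd l (fun y => pd m (fun z => K z i j) y) x
      + H x l k * pd l (fun y => K y i m) x * pd m (fun y => τ y j) x
      + H x l k * pd l (fun y => K y m j) x * pd m (fun y => τ y i) x
      - H x l k * pd m (fun y => K y i j) x * pd l (fun y => τ y m) x
      + K x l m * pd l (fun y => H y i j) x * pd m (fun y => τ y k) x
      + K x l m * pd l (fun y => H y j k) x * pd m (fun y => τ y i) x
      + K x l m * pd l (fun y => H y k i) x * pd m (fun y => τ y j) x
      + K x m i * pd l (fun y => H y j k) x * pd m (fun y => τ y l) x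
      + K x m j * pd l (fun y => H y k i) x * pd m (fun y => τ y l) x
      + K x m k * pd l (fun y => H y i j) x * pd m (fun y => τ y l) x
      - τ x m * pd l (fun y => H y i j) x * pd m (fun y => K y l k) x
      - τ x m * pd l (fun y => H y j k) x * pd m (fun y => K y l i) x
      - τ x m * pd l (fun y => H y k i) x * pd m (fun y => K y l j) x)
     - (-H x m i * τ x l * pd l (fun y => pd m (fun z => K z j k) y) x
      + H x m i * pd m (fun y => K y j l) x * pd l (fun y => τ y k) x
      + H x m i * pd m (fun y => K y l k) x * pd l (fun y => τ y j) x
      - H x m j * τ x l * pd l (fun y => pd m (fun z => K z k i) y) x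
      + H x m j * pd m (fun y => K y k l) x * pd l (fun y => τ y i) x
      + H x m j * pd m (fun y => K y l i) x * pd l (fun y => τ y k) x
      - H x m k * τ x l * pd l (fun y => pd m (fun z => K z i j) y) x
      + H x m k * pd m (fun y => K y i l) x * pd l (fun y => τ y j) x
      + H x m k * pd m (fun y => K y l j) x * pd l (fun y => τ y i) x
      + H x m l * pd m (fun y => K y i j) x * pd l (fun y => τ y k) x
      + H x m l * pd m (fun y => K y j k) x * pd l (fun y => τ y i) x
      + H x m l * pd m (fun y => K y k i) x * pd l (fun y => τ y j) x
      - K x m i * τ x l * pd l (fun y => pd m (fun z => H z j k) y) x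
      + K x m i * pd m (fun y => H y j l) x * pd l (fun y => τ y k) x
      + K x m i * pd m (fun y => H y l k) x * pd l (fun y => τ y j) x
      - K x m j * τ x l * pd l (fun y => pd m (fun z => H z k i) y) x
      + K x m j * pd m (fun y => H y k l) x * pd l (fun y => τ y i) x
      + K x m j * pd m (fun y => H y l i) x * pd l (fun y => τ y k) x
      - K x m k * τ x l * pd l (fun y => pd m (fun z => H z i j) y) x
      + K x m k * pd m (fun y => H y i l) x * pd l (fun y => τ y j) x
      + K x m k * pd m (fun y => H y l j) x * pd l (fun y => τ y i) x
      + K x m l * pd m (fun y => H y i j) x * pd l (fun y => τ y k) x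
      + K x m l * pd m (fun y => H y j k) x * pd l (fun y => τ y i) x
      + K x m l * pd m (fun y => H y k i) x * pd l (fun y => τ y j) x
      - τ x l * pd l (fun y => H y m i) x * pd m (fun y => K y j k) x
      - τ x l * pd l (fun y => H y m j) x * pd m (fun y => K y k i) x
      - τ x l * pd l (fun y => H y m k) x * pd m (fun y => K y i j) x
      - τ x l * pd m (fun y => H y i j) x * pd l (fun y => K y m k) x
      - τ x l * pd m (fun y => H y j k) x * pd l (fun y => K y m i) x
      - τ x l * pd m (fun y => H y k i) x * pd l (fun y => K y m j) x)) = 0 := by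
  linear_combination
      -(τ x l * pd m (fun y => pd l (fun z => H z i j) y) x * (hK m k)) +
      K x m k * pd m (fun y => pd l (fun z => τ z i) y) x * (hH l j) +
      H x i l * pd m (fun y => pd l (fun z => τ z j) y) x * (hK m k) +
      -(τ x l * pd m (fun y => pd l (fun z => H z j k) y) x * (hK m i)) +
      K x m i * pd m (fun y => pd l (fun z => τ z j) y) x * (hH l k) +
      H x j l * pd m (fun y => pd l (fun z => τ z k) y) x * (hK m i) +
      -(τ x l * pd m (fun y => pd l (fun z => H z k i) y) x * (hK m j)) +
      K x m j * pd m (fun y => pd l (fun z => τ z k) y) x * (hH l i) +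
      H x k l * pd m (fun y => pd l (fun z => τ z i) y) x * (hK m j) +
      -(τ x l * pd m (fun y => pd l (fun z => K z i j) y) x * (hH m k)) +
      K x l j * pd m (fun y => pd l (fun z => τ z i) y) x * (hH m k) +
      K x i l * pd m (fun y => pd l (fun z => τ z j) y) x * (hH m k) +
      -(τ x l * pd m (fun y => pd l (fun z => K z j k) y) x * (hH m i)) +
      K x l k * pd m (fun y => pd l (fun z => τ z j) y) x * (hH m i) +
      K x j l * pd m (fun y => pd l (fun z => τ z k) y) x * (hH m i) +
      -(τ x l * pd m (fun y => pd l (fun z => K z k i) y) x * (hH m j)) +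
      K x l i * pd m (fun y => pd l (fun z => τ z k) y) x * (hH m j) +
      K x k l * pd m (fun y => pd l (fun z => τ z i) y) x * (hH m j) +
      τ x m * pd m (fun y => pd l (fun z => H z i j) y) x * (hK l k) +
      τ x m * pd m (fun y => pd l (fun z => K z i j) y) x * (hH l k) +
      τ x m * pd m (fun y => pd l (fun z => H z j k) y) x * (hK l i) +
      τ x m * pd m (fun y => pd l (fun z => K z j k) y) x * (hH l i) +
      τ x m * pd m (fun y => pd l (fun z => H z k i) y) x * (hK l j) +
      τ x m * pd m (fun y => pd l (fun z => K z k i) y) x * (hH l j) +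
      -(τ x m * pd l (fun y => pd m (fun z => H z i j) y) x * (hK l k)) +
      K x l k * pd l (fun y => pd m (fun z => τ z i) y) x * (hH m j) +
      H x i m * pd l (fun y => pd m (fun z => τ z j) y) x * (hK l k) +
      -(τ x m * pd l (fun y => pd m (fun z => H z j k) y) x * (hK l i)) +
      K x l i * pd l (fun y => pd m (fun z => τ z j) y) x * (hH m k) +
      H x j m * pd l (fun y => pd m (fun z => τ z k) y) x * (hK l i) +
      -(τ x m * pd l (fun y => pd m (fun z => H z k i) y) x * (hK l j)) +
      K x l j * pd l (fun y => pd m (fun z => τ z k) y) x * (hH m i) +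
      H x k m * pd l (fun y => pd m (fun z => τ z i) y) x * (hK l j) +
      -(τ x m * pd l (fun y => pd m (fun z => K z i j) y) x * (hH l k)) +
      K x m j * pd l (fun y => pd m (fun z => τ z i) y) x * (hH l k) +
      K x i m * pd l (fun y => pd m (fun z => τ z j) y) x * (hH l k) +
      -(τ x m * pd l (fun y => pd m (fun z => K z j k) y) x * (hH l i)) +
      K x m k * pd l (fun y => pd m (fun z => τ z j) y) x * (hH l i) +
      K x j m * pd l (fun y => pd m (fun z => τ z k) y) x * (hH l i) +
      -(τ x m * pd l (fun y => pd m (fun z => K z k i) y) x * (hH l j)) +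
      K x m i * pd l (fun y => pd m (fun z => τ z k) y) x * (hH l j) +
      K x k m * pd l (fun y => pd m (fun z => τ z i) y) x * (hH l j) +
      τ x l * pd l (fun y => pd m (fun z => H z i j) y) x * (hK m k) +
      τ x l * pd l (fun y => pd m (fun z => K z i j) y) x * (hH m k) +
      τ x l * pd l (fun y => pd m (fun z => H z j k) y) x * (hK m i) +
      τ x l * pd l (fun y => pd m (fun z => K z j k) y) x * (hH m i) +
      τ x l * pd l (fun y => pd m (fun z => H z k i) y) x * (hK m j) +
      τ x l * pd l (fun y => pd m (fun z => K z k i) y) x * (hH m j) +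
      -(H x j l * pd m (fun y => pd l (fun z => τ z i) y) x * (hK m k)) +
      -(H x k l * pd m (fun y => pd l (fun z => τ z j) y) x * (hK m i)) +
      K x j m * τ x l * (hd2H m l k i) +
      -(H x i l * pd m (fun y => pd l (fun z => τ z k) y) x * (hK m j)) +
      -(H x k m * pd m (fun y => pd l (fun z => τ z i) y) x * (hK l j)) +
      -(H x i m * pd m (fun y => pd l (fun z => τ z j) y) x * (hK l k)) +
      H x j m * τ x l * (hd2K m l k i) +
      -(H x j m * pd m (fun y => pd l (fun z => τ z k) y) x * (hK l i)) +
      -(K x j l * τ x m * (hd2H m l k i)) +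
      -(H x j l * τ x m * (hd2K m l k i)) +
      K x k l * τ x m * (hcH l m i j) +
      -(H x j m * pd l (fun y => pd m (fun z => τ z i) y) x * (hK l k)) +
      -(H x i m * K x k l * (hct l m j)) +
      K x i l * τ x m * (hcH l m j k) +
      -(H x k m * pd l (fun y => pd m (fun z => τ z j) y) x * (hK l i)) +
      -(H x j m * K x i l * (hct l m k)) +
      K x j l * τ x m * (hd2H l m k i) +
      -(H x i m * pd l (fun y => pd m (fun z => τ z k) y) x * (hK l j)) +
      -(H x k m * K x j l * (hct l m i)) +
      H x k l * τ x m * (hcK l m i j) +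
      -(H x k l * pd l (fun y => pd m (fun z => τ z i) y) x * (hK m j)) +
      -(H x k l * K x i m * (hct l m j)) +
      H x i l * τ x m * (hcK l m j k) +
      -(H x i l * pd l (fun y => pd m (fun z => τ z j) y) x * (hK m k)) +
      -(H x i l * K x j m * (hct l m k)) +
      H x j l * τ x m * (hd2K l m k i) +
      -(H x j l * pd l (fun y => pd m (fun z => τ z k) y) x * (hK m i)) +
      -(H x j l * K x k m * (hct l m i)) +
      -(K x k m * τ x l * (hcH l m i j)) +
      -(H x k m * τ x l * (hcK l m i j)) +
      -(K x i m * τ x l * (hcH l m j k)) +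
      -(H x i m * τ x l * (hcK l m j k)) +
      -(K x j m * τ x l * (hd2H l m k i)) +
      -(H x j m * τ x l * (hd2K l m k i)) +
      H x j m * K x k l * (hct l m i) +
      H x k m * K x i l * (hct l m j) +
      -(K x j l * τ x m * (hcH l m i k)) +
      H x i m * K x j l * (hct l m k) +
      H x k l * K x j m * (hct l m i) +
      H x i l * K x k m * (hct l m j) +
      -(H x j l * τ x m * (hcK l m i k)) +
      H x j l * K x i m * (hct l m k) +
      K x j m * τ x l * (hcH l m i k) +
      H x j m * τ x l * (hcK l m i k)

lemma lemA {H K : (Fin n → ℝ) → Matrix (Fin n) (Fin n) ℝ} {τ : (Fin n → ℝ) → (Fin n → ℝ)}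
    (hHs : ∀ i j, ContDiff ℝ (⊤:ℕ∞) fun x => H x i j)
    (hKs : ∀ i j, ContDiff ℝ (⊤:ℕ∞) fun x => K x i j)
    (hτs : ∀ i, ContDiff ℝ (⊤:ℕ∞) fun x => τ x i)
    (hHa : ∀ x, (H x)ᵀ = -H x) (hKa : ∀ x, (K x)ᵀ = -K x)
    (x : Fin n → ℝ) (i j k : Fin n) :
    schouten (lieD τ H) K x i j k + schouten H (lieD τ K) x i j k
      = ∑ m, (τ x m * pd m (fun y => schouten H K y i j k) x
        - schouten H K x m j k * pd m (fun y => τ y i) x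
        - schouten H K x i m k * pd m (fun y => τ y j) x
        - schouten H K x i j m * pd m (fun y => τ y k) x) := by
  have hHp : ∀ y a b, H y a b = -H y b a := fun y a b => by
    have h := congrFun (congrFun (hHa y) b) a; simpa using h
  have hKp : ∀ y a b, K y a b = -K y b a := fun y a b => by
    have h := congrFun (congrFun (hKa y) b) a; simpa using h
  have hH : ∀ a b, H x a b = -H x b a := hHp x
  have hK : ∀ a b, K x a b = -K x b a := hKp x
  have hdHy : ∀ (y : Fin n → ℝ) (m a b : Fin n), pd m (fun y' => H y' a b) y = -pd m (fun y' => H y' b a) y := by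
    intro y m a b
    rw [show (fun y' => H y' a b) = fun y' => -(H y' b a) from funext fun y' => hHp y' a b, pd_neg]
  have hdKy : ∀ (y : Fin n → ℝ) (m a b : Fin n), pd m (fun y' => K y' a b) y = -pd m (fun y' => K y' b a) y := by
    intro y m a b
    rw [show (fun y' => K y' a b) = fun y' => -(K y' b a) from funext fun y' => hKp y' a b, pd_neg]
  have hdH : ∀ m a b, pd m (fun y => H y a b) x = -pd m (fun y => H y b a) x := hdHy x
  have hdK : ∀ m a b, pd m (fun y => K y a b) x = -pd m (fun y => K y b a) x := hdKy x
  have hd2H : ∀ m l a b, pd m (fun y => pd l (fun z => H z a b) y) x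
      = -pd m (fun y => pd l (fun z => H z b a) y) x := by
    intro m l a b
    rw [show (fun y => pd l (fun z => H z a b) y) = fun y => -(pd l (fun z => H z b a) y) from
      funext fun y => hdHy y l a b, pd_neg]
  have hd2K : ∀ m l a b, pd m (fun y => pd l (fun z => K z a b) y) x
      = -pd m (fun y => pd l (fun z => K z b a) y) x := by
    intro m l a b
    rw [show (fun y => pd l (fun z => K z a b) y) = fun y => -(pd l (fun z => K z b a) y) from
      funext fun y => hdKy y l a b, pd_neg]
  have hcH : ∀ m l a b, pd m (fun y => pd l (fun z => H z a b) y) x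
      = pd l (fun y => pd m (fun z => H z a b) y) x := fun m l a b => pd_comm m l _ (hHs a b) x
  have hcK : ∀ m l a b, pd m (fun y => pd l (fun z => K z a b) y) x
      = pd l (fun y => pd m (fun z => K z a b) y) x := fun m l a b => pd_comm m l _ (hKs a b) x
  have hct : ∀ m l a, pd m (fun y => pd l (fun z => τ z a) y) x
      = pd l (fun y => pd m (fun z => τ z a) y) x := fun m l a => pd_comm m l _ (hτs a) x
  have e1 : schouten (lieD τ H) K x i j k = ∑ m, ∑ l,
      (H x i l * K x m k * pd m (fun y => pd l (fun z => τ z j) y) x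
      + H x j l * K x m i * pd m (fun y => pd l (fun z => τ z k) y) x
      + H x k l * K x m j * pd m (fun y => pd l (fun z => τ z i) y) x
      + H x l i * K x m j * pd m (fun y => pd l (fun z => τ z k) y) x
      + H x l i * pd m (fun y => K y j k) x * pd l (fun y => τ y m) x
      + H x l j * K x m k * pd m (fun y => pd l (fun z => τ z i) y) x
      + H x l j * pd m (fun y => K y k i) x * pd l (fun y => τ y m) x
      + H x l k * K x m i * pd m (fun y => pd l (fun z => τ z j) y) x
      + H x l k * pd m (fun y => K y i j) x * pd l (fun y => τ y m) x
      + H x m l * pd m (fun y => K y i j) x * pd l (fun y => τ y k) x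
      + H x m l * pd m (fun y => K y j k) x * pd l (fun y => τ y i) x
      + H x m l * pd m (fun y => K y k i) x * pd l (fun y => τ y j) x
      - K x m i * τ x l * pd m (fun y => pd l (fun z => H z j k) y) x
      - K x m i * pd l (fun y => H y j k) x * pd m (fun y => τ y l) x
      + K x m i * pd m (fun y => H y j l) x * pd l (fun y => τ y k) x
      + K x m i * pd m (fun y => H y l k) x * pd l (fun y => τ y j) x
      - K x m j * τ x l * pd m (fun y => pd l (fun z => H z k i) y) x
      - K x m j * pd l (fun y => H y k i) x * pd m (fun y => τ y l) x
      + K x m j * pd m (fun y => H y k l) x * pd l (fun y => τ y i) x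
      + K x m j * pd m (fun y => H y l i) x * pd l (fun y => τ y k) x
      - K x m k * τ x l * pd m (fun y => pd l (fun z => H z i j) y) x
      - K x m k * pd l (fun y => H y i j) x * pd m (fun y => τ y l) x
      + K x m k * pd m (fun y => H y i l) x * pd l (fun y => τ y j) x
      + K x m k * pd m (fun y => H y l j) x * pd l (fun y => τ y i) x
      - τ x l * pd l (fun y => H y m i) x * pd m (fun y => K y j k) x
      - τ x l * pd l (fun y => H y m j) x * pd m (fun y => K y k i) x
      - τ x l * pd l (fun y => H y m k) x * pd m (fun y => K y i j) x) := by
    rw [schouten, ← Finset.sum_neg_distrib]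
    refine Finset.sum_congr rfl fun m _ => ?_
    rw [pd_lieD hτs hHs m i j x, pd_lieD hτs hHs m j k x, pd_lieD hτs hHs m k i x,
      show lieD τ H x m k = ∑ l, (τ x l * pd l (fun z => H z m k) x
        - H x l k * pd l (fun z => τ z m) x - H x m l * pd l (fun z => τ z k) x) from rfl,
      show lieD τ H x m i = ∑ l, (τ x l * pd l (fun z => H z m i) x
        - H x l i * pd l (fun z => τ z m) x - H x m l * pd l (fun z => τ z i) x) from rfl,
      show lieD τ H x m j = ∑ l, (τ x l * pd l (fun z => H z m j) x
        - H x l j * pd l (fun z => τ z m) x - H x m l * pd l (fun z => τ z j) x) from rfl]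
    simp only [Finset.mul_sum, Finset.sum_mul, ← Finset.sum_add_distrib]
    rw [← Finset.sum_neg_distrib]
    exact Finset.sum_congr rfl fun l _ => by ring
  have e2 : schouten H (lieD τ K) x i j k = ∑ m, ∑ l,
      (H x m i * K x j l * pd m (fun y => pd l (fun z => τ z k) y) x
      + H x m i * K x l k * pd m (fun y => pd l (fun z => τ z j) y) x
      - H x m i * τ x l * pd m (fun y => pd l (fun z => K z j k) y) x
      - H x m i * pd l (fun y => K y j k) x * pd m (fun y => τ y l) x
      + H x m i * pd m (fun y => K y j l) x * pd l (fun y => τ y k) x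
      + H x m i * pd m (fun y => K y l k) x * pd l (fun y => τ y j) x
      + H x m j * K x k l * pd m (fun y => pd l (fun z => τ z i) y) x
      + H x m j * K x l i * pd m (fun y => pd l (fun z => τ z k) y) x
      - H x m j * τ x l * pd m (fun y => pd l (fun z => K z k i) y) x
      - H x m j * pd l (fun y => K y k i) x * pd m (fun y => τ y l) x
      + H x m j * pd m (fun y => K y k l) x * pd l (fun y => τ y i) x
      + H x m j * pd m (fun y => K y l i) x * pd l (fun y => τ y k) x
      + H x m k * K x i l * pd m (fun y => pd l (fun z => τ z j) y) x
      + H x m k * K x l j * pd m (fun y => pd l (fun z => τ z i) y) x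
      - H x m k * τ x l * pd m (fun y => pd l (fun z => K z i j) y) x
      - H x m k * pd l (fun y => K y i j) x * pd m (fun y => τ y l) x
      + H x m k * pd m (fun y => K y i l) x * pd l (fun y => τ y j) x
      + H x m k * pd m (fun y => K y l j) x * pd l (fun y => τ y i) x
      + K x l i * pd m (fun y => H y j k) x * pd l (fun y => τ y m) x
      + K x l j * pd m (fun y => H y k i) x * pd l (fun y => τ y m) x
      + K x l k * pd m (fun y => H y i j) x * pd l (fun y => τ y m) x
      + K x m l * pd m (fun y => H y i j) x * pd l (fun y => τ y k) x
      + K x m l * pd m (fun y => H y j k) x * pd l (fun y => τ y i) x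
      + K x m l * pd m (fun y => H y k i) x * pd l (fun y => τ y j) x
      - τ x l * pd m (fun y => H y i j) x * pd l (fun y => K y m k) x
      - τ x l * pd m (fun y => H y j k) x * pd l (fun y => K y m i) x
      - τ x l * pd m (fun y => H y k i) x * pd l (fun y => K y m j) x) := by
    rw [schouten, ← Finset.sum_neg_distrib]
    refine Finset.sum_congr rfl fun m _ => ?_
    rw [pd_lieD hτs hKs m i j x, pd_lieD hτs hKs m j k x, pd_lieD hτs hKs m k i x,
      show lieD τ K x m k = ∑ l, (τ x l * pd l (fun z => K z m k) x
        - K x l k * pd l (fun z => τ z m) x - K x m l * pd l (fun z => τ z k) x) from rfl,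
      show lieD τ K x m i = ∑ l, (τ x l * pd l (fun z => K z m i) x
        - K x l i * pd l (fun z => τ z m) x - K x m l * pd l (fun z => τ z i) x) from rfl,
      show lieD τ K x m j = ∑ l, (τ x l * pd l (fun z => K z m j) x
        - K x l j * pd l (fun z => τ z m) x - K x m l * pd l (fun z => τ z j) x) from rfl]
    simp only [Finset.mul_sum, Finset.sum_mul, ← Finset.sum_add_distrib]
    rw [← Finset.sum_neg_distrib]
    exact Finset.sum_congr rfl fun l _ => by ring
  have e3 : (∑ m, (τ x m * pd m (fun y => schouten H K y i j k) x
        - schouten H K x m j k * pd m (fun y => τ y i) x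
        - schouten H K x i m k * pd m (fun y => τ y j) x
        - schouten H K x i j m * pd m (fun y => τ y k) x)) = ∑ m, ∑ l,
      (-H x l i * τ x m * pd m (fun y => pd l (fun z => K z j k) y) x
      + H x l i * pd l (fun y => K y j m) x * pd m (fun y => τ y k) x
      + H x l i * pd l (fun y => K y m k) x * pd m (fun y => τ y j) x
      - H x l j * τ x m * pd m (fun y => pd l (fun z => K z k i) y) x
      + H x l j * pd l (fun y => K y k m) x * pd m (fun y => τ y i) x
      + H x l j * pd l (fun y => K y m i) x * pd m (fun y => τ y k) x
      - H x l k * τ x m * pd m (fun y => pd l (fun z => K z i j) y) x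
      + H x l k * pd l (fun y => K y i m) x * pd m (fun y => τ y j) x
      + H x l k * pd l (fun y => K y m j) x * pd m (fun y => τ y i) x
      + H x l m * pd l (fun y => K y i j) x * pd m (fun y => τ y k) x
      + H x l m * pd l (fun y => K y j k) x * pd m (fun y => τ y i) x
      + H x l m * pd l (fun y => K y k i) x * pd m (fun y => τ y j) x
      - K x l i * τ x m * pd m (fun y => pd l (fun z => H z j k) y) x
      + K x l i * pd l (fun y => H y j m) x * pd m (fun y => τ y k) x
      + K x l i * pd l (fun y => H y m k) x * pd m (fun y => τ y j) x
      - K x l j * τ x m * pd m (fun y => pd l (fun z => H z k i) y) x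
      + K x l j * pd l (fun y => H y k m) x * pd m (fun y => τ y i) x
      + K x l j * pd l (fun y => H y m i) x * pd m (fun y => τ y k) x
      - K x l k * τ x m * pd m (fun y => pd l (fun z => H z i j) y) x
      + K x l k * pd l (fun y => H y i m) x * pd m (fun y => τ y j) x
      + K x l k * pd l (fun y => H y m j) x * pd m (fun y => τ y i) x
      + K x l m * pd l (fun y => H y i j) x * pd m (fun y => τ y k) x
      + K x l m * pd l (fun y => H y j k) x * pd m (fun y => τ y i) x
      + K x l m * pd l (fun y => H y k i) x * pd m (fun y => τ y j) x
      - τ x m * pd l (fun y => H y i j) x * pd m (fun y => K y l k) x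
      - τ x m * pd l (fun y => H y j k) x * pd m (fun y => K y l i) x
      - τ x m * pd l (fun y => H y k i) x * pd m (fun y => K y l j) x
      - τ x m * pd m (fun y => H y l i) x * pd l (fun y => K y j k) x
      - τ x m * pd m (fun y => H y l j) x * pd l (fun y => K y k i) x
      - τ x m * pd m (fun y => H y l k) x * pd l (fun y => K y i j) x) := by
    refine Finset.sum_congr rfl fun m _ => ?_
    rw [pd_schouten hHs hKs m i j k x,
      show schouten H K x m j k = -∑ l, (K x l k * pd l (fun z => H z m j) x
        + H x l k * pd l (fun z => K z m j) x + K x l m * pd l (fun z => H z j k) x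
        + H x l m * pd l (fun z => K z j k) x + K x l j * pd l (fun z => H z k m) x
        + H x l j * pd l (fun z => K z k m) x) from rfl,
      show schouten H K x i m k = -∑ l, (K x l k * pd l (fun z => H z i m) x
        + H x l k * pd l (fun z => K z i m) x + K x l i * pd l (fun z => H z m k) x
        + H x l i * pd l (fun z => K z m k) x + K x l m * pd l (fun z => H z k i) x
        + H x l m * pd l (fun z => K z k i) x) from rfl,
      show schouten H K x i j m = -∑ l, (K x l m * pd l (fun z => H z i j) x
        + H x l m * pd l (fun z => K z i j) x + K x l i * pd l (fun z => H z j m) x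
        + H x l i * pd l (fun z => K z j m) x + K x l j * pd l (fun z => H z m i) x
        + H x l j * pd l (fun z => K z m i) x) from rfl]
    simp only [mul_neg, neg_mul, sub_neg_eq_add, Finset.mul_sum, Finset.sum_mul,
      ← Finset.sum_neg_distrib, ← Finset.sum_add_distrib, ← Finset.sum_sub_distrib]
    exact Finset.sum_congr rfl fun l _ => by ring
  rw [e1, e2, e3, ← sub_eq_zero, ← Finset.sum_add_distrib, ← Finset.sum_sub_distrib]
  simp only [← Finset.sum_add_distrib, ← Finset.sum_sub_distrib]
  refine sum_sum_antisym _ fun m l => ?_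
  linear_combination keyPoint H K τ x hH hK hdH hdK hd2H hd2K hcH hcK hct i j k m l

lemma lemA0 {H K : (Fin n → ℝ) → Matrix (Fin n) (Fin n) ℝ} {τ : (Fin n → ℝ) → (Fin n → ℝ)}
    (hHs : ∀ i j, ContDiff ℝ (⊤:ℕ∞) fun x => H x i j)
    (hKs : ∀ i j, ContDiff ℝ (⊤:ℕ∞) fun x => K x i j)
    (hτs : ∀ i, ContDiff ℝ (⊤:ℕ∞) fun x => τ x i)
    (hHa : ∀ x, (H x)ᵀ = -H x) (hKa : ∀ x, (K x)ᵀ = -K x)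
    (hS : ∀ y a b c, schouten H K y a b c = 0)
    (x : Fin n → ℝ) (i j k : Fin n) :
    schouten (lieD τ H) K x i j k + schouten H (lieD τ K) x i j k = 0 := by
  rw [lemA hHs hKs hτs hHa hKa x i j k]
  refine Finset.sum_eq_zero fun m _ => ?_
  rw [show (fun y => schouten H K y i j k) = fun _ => (0:ℝ) from funext fun y => hS y i j k,
    pd_zero, hS x m j k, hS x i m k, hS x i j m]
  ring

/-- `L_τ(P)` is a Poisson bivector (and then automatically compatible with `P`)
if and only if `[L_τ²(P), P] = 0`. -/
theorem lie_deriv_poisson_iff {n : ℕ} (hn : 1 ≤ n)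
    (P : (Fin n → ℝ) → Matrix (Fin n) (Fin n) ℝ) (hP : IsPoisson P)
    (τ : (Fin n → ℝ) → (Fin n → ℝ)) (hτ : IsVectorField τ) :
    (IsPoisson (lieD τ P) ∧ Compatible (lieD τ P) P) ↔
      ∀ x i j k, schouten (lieD τ (lieD τ P)) P x i j k = 0 := by
  obtain ⟨⟨hPs, hPa⟩, hPP⟩ := hP
  have hTs : ∀ a b, ContDiff ℝ (⊤:ℕ∞) (fun x => lieD τ P x a b) := contDiff_lieD hτ hPs
  have hTa : ∀ x, (lieD τ P x)ᵀ = -(lieD τ P x) := lieD_antisym hPa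
  have key1 : ∀ x i j k, schouten (lieD τ P) P x i j k = 0 := by
    intro x i j k
    have h := lemA0 hPs hPs hτ hPa hPa hPP x i j k
    have hc : schouten P (lieD τ P) x i j k = schouten (lieD τ P) P x i j k :=
      schouten_comm P (lieD τ P) x i j k
    linarith
  have key2 : ∀ x i j k, schouten (lieD τ (lieD τ P)) P x i j k
      + schouten (lieD τ P) (lieD τ P) x i j k = 0 :=
    fun x i j k => lemA0 hTs hPs hτ hTa hPa key1 x i j k
  constructor
  · rintro ⟨⟨_, hTT⟩, _⟩
    intro x i j k
    linarith [key2 x i j k, hTT x i j k]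
  · intro h
    exact ⟨⟨⟨hTs, hTa⟩, fun x i j k => by linarith [key2 x i j k, h x i j k]⟩, key1⟩
end
end

section
/- Let P be a Poisson bivector on ℝⁿ and τ a smooth vector field on ℝⁿ. Then [L_τ²(P), P] + [L_τ(P), L_τ(P)] = 0, where L_τ² = L_τ ∘ L_τ. Consequently L_τ(P) satisfies [L_τ(P), L_τ(P)] = 0 (i.e. is Poisson) exactly when [L_τ²(P), P] = 0. -/
open Matrix BigOperators

noncomputable section

namespace SchoutenAux
variable {n : ℕ}

lemma contDiff_pd {f : (Fin n → ℝ) → ℝ} (hf : ContDiff ℝ (⊤:ℕ∞) f) (k : Fin n) :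
    ContDiff ℝ (⊤:ℕ∞) (pd k f) := by
  have h : ContDiff ℝ (⊤:ℕ∞) (fderiv ℝ f) := hf.fderiv_right (m := (⊤:ℕ∞)) (by simp)
  exact h.clm_apply contDiff_const

lemma smooth_diffAt {f : (Fin n → ℝ) → ℝ} (hf : ContDiff ℝ (⊤:ℕ∞) f) (y : Fin n → ℝ) :
    DifferentiableAt ℝ f y :=
  ((hf.differentiable (by simp)).differentiableAt)

lemma pd_const (k : Fin n) (c : ℝ) (x : Fin n → ℝ) : pd k (fun _ => c) x = 0 := by
  simp [pd]

lemma pd_mul {f g : (Fin n → ℝ) → ℝ} {x : Fin n → ℝ} (k : Fin n)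
    (hf : DifferentiableAt ℝ f x) (hg : DifferentiableAt ℝ g x) :
    pd k (fun y => f y * g y) x = f x * pd k g x + pd k f x * g x := by
  unfold pd
  rw [fderiv_fun_mul hf hg]
  simp [mul_comm]

lemma pd_sum {ι : Type*} (s : Finset ι) {f : ι → (Fin n → ℝ) → ℝ} {x : Fin n → ℝ} (k : Fin n)
    (hf : ∀ i ∈ s, DifferentiableAt ℝ (f i) x) :
    pd k (fun y => ∑ i ∈ s, f i y) x = ∑ i ∈ s, pd k (f i) x := by
  unfold pd
  rw [fderiv_fun_sum hf]
  simp

lemma pd_neg {f : (Fin n → ℝ) → ℝ} {x : Fin n → ℝ} (k : Fin n) :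
    pd k (fun y => -f y) x = -pd k f x := by
  unfold pd; rw [fderiv_fun_neg]; simp

lemma pd_add {f g : (Fin n → ℝ) → ℝ} {x : Fin n → ℝ} (k : Fin n)
    (hf : DifferentiableAt ℝ f x) (hg : DifferentiableAt ℝ g x) :
    pd k (fun y => f y + g y) x = pd k f x + pd k g x := by
  unfold pd; rw [fderiv_fun_add hf hg]; simp

lemma pd_sub {f g : (Fin n → ℝ) → ℝ} {x : Fin n → ℝ} (k : Fin n)
    (hf : DifferentiableAt ℝ f x) (hg : DifferentiableAt ℝ g x) :
    pd k (fun y => f y - g y) x = pd k f x - pd k g x := by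
  unfold pd; rw [fderiv_fun_sub hf hg]; simp

lemma pd_comm {f : (Fin n → ℝ) → ℝ} (hf : ContDiff ℝ (⊤:ℕ∞) f) (x : Fin n → ℝ) (l m : Fin n) :
    pd l (pd m f) x = pd m (pd l f) x := by
  have hsymm : IsSymmSndFDerivAt ℝ f x :=
    (hf.contDiffAt).isSymmSndFDerivAt (by simp; exact (WithTop.coe_le_coe.mpr (le_top : (2:ℕ∞) ≤ ⊤) : ((2:ℕ∞) : WithTop ℕ∞) ≤ ((⊤:ℕ∞) : WithTop ℕ∞)))
  have hdf : DifferentiableAt ℝ (fderiv ℝ f) x :=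
    ((hf.fderiv_right (m := (⊤:ℕ∞)) (by simp)).differentiable
      (by simp)).differentiableAt
  have e : ∀ v w : Fin n → ℝ,
      fderiv ℝ (fun y => fderiv ℝ f y v) x w = fderiv ℝ (fderiv ℝ f) x w v := by
    intro v w
    rw [fderiv_clm_apply hdf (differentiableAt_const v)]
    simp
  show fderiv ℝ (fun y => fderiv ℝ f y (Pi.single m 1)) x (Pi.single l 1) = _
  rw [e, hsymm, ← e]
  rfl

lemma sum_antisym {F : Fin n → Fin n → ℝ} (h : ∀ l m, F l m + F m l = 0) :
    ∑ m : Fin n, ∑ l : Fin n, F l m = 0 := by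
  have h2 : (∑ m : Fin n, ∑ l : Fin n, (F l m + F m l)) = 0 := by
    simp [h]
  simp only [Finset.sum_add_distrib] at h2
  have h3 : (∑ m : Fin n, ∑ l : Fin n, F m l) = ∑ m : Fin n, ∑ l : Fin n, F l m :=
    Finset.sum_comm
  linarith

end SchoutenAux

namespace SchoutenAux
variable {n : ℕ}

lemma contDiff_lieD {τ : (Fin n → ℝ) → (Fin n → ℝ)} {H : (Fin n → ℝ) → Matrix (Fin n) (Fin n) ℝ}
    (hH : ∀ i j, ContDiff ℝ (⊤:ℕ∞) fun x => H x i j)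
    (hτ : ∀ i, ContDiff ℝ (⊤:ℕ∞) fun x => τ x i) (i j : Fin n) :
    ContDiff ℝ (⊤:ℕ∞) (fun x => lieD τ H x i j) := by
  show ContDiff ℝ (⊤:ℕ∞) (fun x => ∑ l, (τ x l * pd l (fun y => H y i j) x
    - H x l j * pd l (fun y => τ y i) x - H x i l * pd l (fun y => τ y j) x))
  apply ContDiff.sum; intro l _
  exact (((hτ l).mul (contDiff_pd (hH i j) l)).sub
    ((hH l j).mul (contDiff_pd (hτ i) l))).sub ((hH i l).mul (contDiff_pd (hτ j) l))

lemma antisym_lieD {τ : (Fin n → ℝ) → (Fin n → ℝ)} {H : (Fin n → ℝ) → Matrix (Fin n) (Fin n) ℝ}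
    (hHa : ∀ x, (H x)ᵀ = -H x) (x : Fin n → ℝ) :
    (lieD τ H x)ᵀ = -(lieD τ H x) := by
  have hval : ∀ y (p q : Fin n), H y q p = -H y p q := by
    intro y p q
    have h := congrFun (congrFun (hHa y) p) q
    simpa [Matrix.transpose_apply, Matrix.neg_apply] using h
  have hfun : ∀ (p q : Fin n), (fun y => H y q p) = (fun y => -(H y p q)) := by
    intro p q; funext y; exact hval y p q
  ext p q
  simp only [Matrix.transpose_apply, Matrix.neg_apply, lieD, Matrix.of_apply]
  rw [← Finset.sum_neg_distrib]
  refine Finset.sum_congr rfl fun l _ => ?_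
  rw [hfun p q, pd_neg, hval x l p, hval x q l]
  ring

lemma pd_lieD {τ : (Fin n → ℝ) → (Fin n → ℝ)} {H : (Fin n → ℝ) → Matrix (Fin n) (Fin n) ℝ}
    (hH : ∀ i j, ContDiff ℝ (⊤:ℕ∞) fun x => H x i j)
    (hτ : ∀ i, ContDiff ℝ (⊤:ℕ∞) fun x => τ x i) (x : Fin n → ℝ) (m p q : Fin n) :
    pd m (fun y => lieD τ H y p q) x = ∑ l, ((-1) * (H x l q * pd m (pd l (fun y => τ y p)) x) + (-1) * (H x p l * pd m (pd l (fun y => τ y q)) x) + (pd l (fun y => H y p q) x * pd m (fun y => τ y l) x) + (-1) * (pd m (fun y => H y l q) x * pd l (fun y => τ y p) x) + (-1) * (pd m (fun y => H y p l) x * pd l (fun y => τ y q) x) + (pd m (pd l (fun y => H y p q)) x * τ x l)) := by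
  have e : (fun y => lieD τ H y p q) = fun y => ∑ l, (τ y l * pd l (fun z => H z p q) y
      - H y l q * pd l (fun z => τ z p) y - H y p l * pd l (fun z => τ z q) y) := rfl
  rw [e, pd_sum Finset.univ m (fun l _ =>
    (((smooth_diffAt (hτ l) x).fun_mul (smooth_diffAt (contDiff_pd (hH p q) l) x)).fun_sub
      ((smooth_diffAt (hH l q) x).fun_mul (smooth_diffAt (contDiff_pd (hτ p) l) x))).fun_sub
      ((smooth_diffAt (hH p l) x).fun_mul (smooth_diffAt (contDiff_pd (hτ q) l) x)))]
  refine Finset.sum_congr rfl fun l _ => ?_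
  rw [pd_sub m (((smooth_diffAt (hτ l) x).fun_mul (smooth_diffAt (contDiff_pd (hH p q) l) x)).fun_sub
      ((smooth_diffAt (hH l q) x).fun_mul (smooth_diffAt (contDiff_pd (hτ p) l) x)))
      ((smooth_diffAt (hH p l) x).fun_mul (smooth_diffAt (contDiff_pd (hτ q) l) x)),
    pd_sub m ((smooth_diffAt (hτ l) x).fun_mul (smooth_diffAt (contDiff_pd (hH p q) l) x))
      ((smooth_diffAt (hH l q) x).fun_mul (smooth_diffAt (contDiff_pd (hτ p) l) x)),
    pd_mul m (smooth_diffAt (hτ l) x) (smooth_diffAt (contDiff_pd (hH p q) l) x),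
    pd_mul m (smooth_diffAt (hH l q) x) (smooth_diffAt (contDiff_pd (hτ p) l) x),
    pd_mul m (smooth_diffAt (hH p l) x) (smooth_diffAt (contDiff_pd (hτ q) l) x)]
  ring

lemma pd_schouten {H K : (Fin n → ℝ) → Matrix (Fin n) (Fin n) ℝ}
    (hH : ∀ i j, ContDiff ℝ (⊤:ℕ∞) fun x => H x i j)
    (hK : ∀ i j, ContDiff ℝ (⊤:ℕ∞) fun x => K x i j) (x : Fin n → ℝ) (m p q r : Fin n) :
    pd m (fun y => schouten H K y p q r) x = -∑ l, ((H x l p * pd m (pd l (fun y => K y q r)) x) + (H x l q * pd m (pd l (fun y => K y r p)) x) + (H x l r * pd m (pd l (fun y => K y p q)) x) + (K x l p * pd m (pd l (fun y => H y q r)) x) + (K x l q * pd m (pd l (fun y => H y r p)) x) + (K x l r * pd m (pd l (fun y => H y p q)) x) + (pd l (fun y => H y p q) x * pd m (fun y => K y l r) x) + (pd l (fun y => H y q r) x * pd m (fun y => K y l p) x) + (pd l (fun y => H y r p) x * pd m (fun y => K y l q) x) + (pd m (fun y => H y l p) x * pd l (fun y => K y q r) x) + (pd m (fun y => H y l q)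 x * pd l (fun y => K y r p) x) + (pd m (fun y => H y l r) x * pd l (fun y => K y p q) x)) := by
  have e : (fun y => schouten H K y p q r) = fun y => -∑ l,
      (K y l r * pd l (fun z => H z p q) y + H y l r * pd l (fun z => K z p q) y
     + K y l p * pd l (fun z => H z q r) y + H y l p * pd l (fun z => K z q r) y
     + K y l q * pd l (fun z => H z r p) y + H y l q * pd l (fun z => K z r p) y) := rfl
  have hi : ∀ (l : Fin n), DifferentiableAt ℝ (fun y =>
      K y l r * pd l (fun z => H z p q) y + H y l r * pd l (fun z => K z p q) y
     + K y l p * pd l (fun z => H z q r) y + H y l p * pd l (fun z => K z q r) y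
     + K y l q * pd l (fun z => H z r p) y + H y l q * pd l (fun z => K z r p) y) x := by
    intro l
    exact (((((((smooth_diffAt (hK l r) x).mul (smooth_diffAt (contDiff_pd (hH p q) l) x)).add
      ((smooth_diffAt (hH l r) x).mul (smooth_diffAt (contDiff_pd (hK p q) l) x))).add
      ((smooth_diffAt (hK l p) x).mul (smooth_diffAt (contDiff_pd (hH q r) l) x))).add
      ((smooth_diffAt (hH l p) x).mul (smooth_diffAt (contDiff_pd (hK q r) l) x))).add
      ((smooth_diffAt (hK l q) x).mul (smooth_diffAt (contDiff_pd (hH r p) l) x))).add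
      ((smooth_diffAt (hH l q) x).mul (smooth_diffAt (contDiff_pd (hK r p) l) x)))
  rw [e, pd_neg, pd_sum Finset.univ m (fun l _ => hi l)]
  rw [neg_inj]
  refine Finset.sum_congr rfl fun l _ => ?_
  have d1 : DifferentiableAt ℝ (fun y => K y l r * pd l (fun z => H z p q) y) x :=
    (smooth_diffAt (hK l r) x).mul (smooth_diffAt (contDiff_pd (hH p q) l) x)
  have d2 : DifferentiableAt ℝ (fun y => H y l r * pd l (fun z => K z p q) y) x :=
    (smooth_diffAt (hH l r) x).mul (smooth_diffAt (contDiff_pd (hK p q) l) x)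
  have d3 : DifferentiableAt ℝ (fun y => K y l p * pd l (fun z => H z q r) y) x :=
    (smooth_diffAt (hK l p) x).mul (smooth_diffAt (contDiff_pd (hH q r) l) x)
  have d4 : DifferentiableAt ℝ (fun y => H y l p * pd l (fun z => K z q r) y) x :=
    (smooth_diffAt (hH l p) x).mul (smooth_diffAt (contDiff_pd (hK q r) l) x)
  have d5 : DifferentiableAt ℝ (fun y => K y l q * pd l (fun z => H z r p) y) x :=
    (smooth_diffAt (hK l q) x).mul (smooth_diffAt (contDiff_pd (hH r p) l) x)
  have d6 : DifferentiableAt ℝ (fun y => H y l q * pd l (fun z => K z r p) y) x :=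
    (smooth_diffAt (hH l q) x).mul (smooth_diffAt (contDiff_pd (hK r p) l) x)
  rw [pd_add m ((((d1.fun_add d2).fun_add d3).fun_add d4).fun_add d5) d6,
    pd_add m (((d1.fun_add d2).fun_add d3).fun_add d4) d5, pd_add m ((d1.fun_add d2).fun_add d3) d4,
    pd_add m (d1.fun_add d2) d3, pd_add m d1 d2,
    pd_mul m (smooth_diffAt (hK l r) x) (smooth_diffAt (contDiff_pd (hH p q) l) x),
    pd_mul m (smooth_diffAt (hH l r) x) (smooth_diffAt (contDiff_pd (hK p q) l) x),
    pd_mul m (smooth_diffAt (hK l p) x) (smooth_diffAt (contDiff_pd (hH q r) l) x),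
    pd_mul m (smooth_diffAt (hH l p) x) (smooth_diffAt (contDiff_pd (hK q r) l) x),
    pd_mul m (smooth_diffAt (hK l q) x) (smooth_diffAt (contDiff_pd (hH r p) l) x),
    pd_mul m (smooth_diffAt (hH l q) x) (smooth_diffAt (contDiff_pd (hK r p) l) x)]
  ring

lemma leibniz {H K : (Fin n → ℝ) → Matrix (Fin n) (Fin n) ℝ} {τ : (Fin n → ℝ) → (Fin n → ℝ)}
    (hH : ∀ i j, ContDiff ℝ (⊤:ℕ∞) fun x => H x i j) (hHa : ∀ x, (H x)ᵀ = -H x)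
    (hK : ∀ i j, ContDiff ℝ (⊤:ℕ∞) fun x => K x i j) (hKa : ∀ x, (K x)ᵀ = -K x)
    (hτ : ∀ i, ContDiff ℝ (⊤:ℕ∞) fun x => τ x i)
    (x : Fin n → ℝ) (i j k : Fin n) :
    schouten (lieD τ H) K x i j k + schouten H (lieD τ K) x i j k
      = ∑ m, (τ x m * pd m (fun y => schouten H K y i j k) x
          - schouten H K x m j k * pd m (fun y => τ y i) x
          - schouten H K x i m k * pd m (fun y => τ y j) x
          - schouten H K x i j m * pd m (fun y => τ y k) x) := by
  have hvalH : ∀ y (p q : Fin n), H y q p = -H y p q := by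
    intro y p q
    have h := congrFun (congrFun (hHa y) p) q
    simpa [Matrix.transpose_apply, Matrix.neg_apply] using h
  have hvalK : ∀ y (p q : Fin n), K y q p = -K y p q := by
    intro y p q
    have h := congrFun (congrFun (hKa y) p) q
    simpa [Matrix.transpose_apply, Matrix.neg_apply] using h
  have hfunH : ∀ (p q : Fin n), (fun y => H y q p) = (fun y => -(H y p q)) := by
    intro p q; funext y; exact hvalH y p q
  have hfunK : ∀ (p q : Fin n), (fun y => K y q p) = (fun y => -(K y p q)) := by
    intro p q; funext y; exact hvalK y p q
  have ha : ∀ p q : Fin n, H x p q + H x q p = 0 := by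
    intro p q; rw [hvalH x p q]; ring
  have hb : ∀ p q : Fin n, K x p q + K x q p = 0 := by
    intro p q; rw [hvalK x p q]; ring
  have hda : ∀ r p q : Fin n, pd r (fun y => H y p q) x + pd r (fun y => H y q p) x = 0 := by
    intro r p q; rw [hfunH p q, pd_neg]; ring
  have hdb : ∀ r p q : Fin n, pd r (fun y => K y p q) x + pd r (fun y => K y q p) x = 0 := by
    intro r p q; rw [hfunK p q, pd_neg]; ring
  have hfun2H : ∀ (s p q : Fin n), (pd s (fun y => H y q p)) = (fun y => -(pd s (fun y => H y p q) y)) := by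
    intro s p q; funext y; rw [hfunH p q, pd_neg]
  have hfun2K : ∀ (s p q : Fin n), (pd s (fun y => K y q p)) = (fun y => -(pd s (fun y => K y p q) y)) := by
    intro s p q; funext y; rw [hfunK p q, pd_neg]
  have hdda_s : ∀ r s p q : Fin n,
      pd r (pd s (fun y => H y p q)) x - pd s (pd r (fun y => H y p q)) x = 0 := by
    intro r s p q; rw [pd_comm (hH p q)]; ring
  have hddb_s : ∀ r s p q : Fin n,
      pd r (pd s (fun y => K y p q)) x - pd s (pd r (fun y => K y p q)) x = 0 := by
    intro r s p q; rw [pd_comm (hK p q)]; ring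
  have hdda_a : ∀ r s p q : Fin n,
      pd r (pd s (fun y => H y p q)) x + pd r (pd s (fun y => H y q p)) x = 0 := by
    intro r s p q; rw [hfun2H s p q, pd_neg]; ring
  have hddb_a : ∀ r s p q : Fin n,
      pd r (pd s (fun y => K y p q)) x + pd r (pd s (fun y => K y q p)) x = 0 := by
    intro r s p q; rw [hfun2K s p q, pd_neg]; ring
  have hddt : ∀ r s p : Fin n,
      pd r (pd s (fun y => τ y p)) x - pd s (pd r (fun y => τ y p)) x = 0 := by
    intro r s p; rw [pd_comm (hτ p)]; ring
  rw [← sub_eq_zero]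
  simp only [pd_schouten hH hK x]
  simp only [schouten]
  simp only [pd_lieD hH hτ x, pd_lieD hK hτ x]
  simp only [lieD, Matrix.of_apply]
  simp only [Finset.mul_sum, Finset.sum_mul, mul_neg, neg_mul, neg_neg,
    ← Finset.sum_neg_distrib, ← Finset.sum_add_distrib, ← Finset.sum_sub_distrib]
  apply sum_antisym
  intro l m
  linear_combination ((-(pd m (pd l (fun y => H y i j)) x * τ x l)) + (H x i l * pd m (pd l (fun y => τ y j)) x) + (pd l (pd m (fun y => H y i j)) x * τ x l) + (-(H x j l * pd m (pd l (fun y => τ y i)) x)) + (-(H x i l * pd l (pd m (fun y => τ y j)) x))) * (hb m k) + ((K x m k * pd m (pd l (fun y => τ y i)) x) + (pd m (pd l (fun y => K y k i)) x * τ x m) + (-(pd l (pd m (fun y => K y k i)) x * τ x m)) + (K x m i * pd l (pd m (fun y => τ y k)) x) + (K x k m * pd l (pd m (fun y => τ y i)) x)) * (ha l j) + ((-(pd m (pd l (fun y => H y j k)) x * τ x l)) + (H x j l * pd m (pd l (fun y => τ y k)) x) + (pd l (pd m (fun y => H y j k)) x * τ x l) + (-(H x k l * pd m (pd l (fun y =>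 τ y j)) x)) + (-(H x j l * pd l (pd m (fun y => τ y k)) x))) * (hb m i) + ((K x m i * pd m (pd l (fun y => τ y j)) x) + (pd m (pd l (fun y => K y i j)) x * τ x m) + (-(pd l (pd m (fun y => K y i j)) x * τ x m)) + (K x m j * pd l (pd m (fun y => τ y i)) x) + (K x i m * pd l (pd m (fun y => τ y j)) x)) * (ha l k) + ((-(pd m (pd l (fun y => H y k i)) x * τ x l)) + (H x k l * pd m (pd l (fun y => τ y i)) x) + (pd l (pd m (fun y => H y k i)) x * τ x l) + (-(H x i l * pd m (pd l (fun y => τ y k)) x)) + (-(H x k l * pd l (pd m (fun y => τ y i)) x))) * (hb m j) + ((K x m j * pd m (pd l (fun y => τ y k)) x) + (pd m (pd l (fun y => K y j k)) x * τ x m) + (-(pd l (pd m (fun y => K y j k)) x * τ x m)) + (K x m k * pd l (pd m (fun y => τ y j)) x) + (K x j m * pd l (pd m (fun y => τ y k)) x)) * (ha l i) + ((-(pd m (pd l (fun y => K y i j)) x * τ x l)) + (K x l j * pd m (pd l (fun y => τ y i)) x) + (K x i l * pd m (pd l (fun y => τ y j)) x) + (K x l i * pd l (pd m (fun y => τ y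 j)) x) + (pd l (pd m (fun y => K y i j)) x * τ x l)) * (ha m k) + ((-(pd m (pd l (fun y => K y j k)) x * τ x l)) + (K x l k * pd m (pd l (fun y => τ y j)) x) + (K x j l * pd m (pd l (fun y => τ y k)) x) + (K x l j * pd l (pd m (fun y => τ y k)) x) + (pd l (pd m (fun y => K y j k)) x * τ x l)) * (ha m i) + ((-(pd m (pd l (fun y => K y k i)) x * τ x l)) + (K x l i * pd m (pd l (fun y => τ y k)) x) + (K x k l * pd m (pd l (fun y => τ y i)) x) + (K x l k * pd l (pd m (fun y => τ y i)) x) + (pd l (pd m (fun y => K y k i)) x * τ x l)) * (ha m j) + ((pd m (pd l (fun y => H y i j)) x * τ x m) + (-(pd l (pd m (fun y => H y i j)) x * τ x m)) + (H x i m * pd l (pd m (fun y => τ y j)) x) + (-(H x i m * pd m (pd l (fun y => τ y j)) x)) + (-(H x j m * pd l (pd m (fun y => τ y i)) x))) * (hb l k) + ((pd m (pd l (fun y => H y j k)) x * τ x m) + (-(pd l (pd m (fun y => H y j k)) x * τ x m)) + (H x j m * pd l (pd m (fun y => τ y k)) x) + (-(H x j m * pd m (pd l (fun y => τ y k)) x))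 + (-(H x k m * pd l (pd m (fun y => τ y j)) x))) * (hb l i) + ((pd m (pd l (fun y => H y k i)) x * τ x m) + (-(pd l (pd m (fun y => H y k i)) x * τ x m)) + (H x k m * pd l (pd m (fun y => τ y i)) x) + (-(H x k m * pd m (pd l (fun y => τ y i)) x)) + (-(H x i m * pd l (pd m (fun y => τ y k)) x))) * (hb l j) + ((K x k m * τ x l) + (-(K x k l * τ x m))) * (hdda_s m l i j) + ((-(H x i l * K x k m)) + (-(H x k m * K x i l)) + (H x k l * K x i m) + (H x i m * K x k l)) * (hddt m l j) + ((K x i m * τ x l) + (-(K x i l * τ x m))) * (hdda_s m l j k) + ((-(H x j l * K x i m)) + (-(H x i m * K x j l)) + (H x i l * K x j m) + (H x j m * K x i l)) * (hddt m l k) + ((K x j m * τ x l) + (-(K x j l * τ x m))) * (hdda_s m l k i) + ((-(H x k l * K x j m)) + (-(H x j m * K x k l)) + (H x j l * K x k m) + (H x k m * K x j l)) * (hddt m l i) + ((H x k m * τ x l) + (-(H x k l * τ x m))) * (hddb_s m l i j) + ((H x i m * τ x l) + (-(H x i l * τ x m))) * (hddb_s m l j k) + ((H x j m * τ x l) + (-(H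 x j l * τ x m))) * (hddb_s m l k i)

end SchoutenAux

/-- `[L_τ²(P), P] + [L_τ(P), L_τ(P)] = 0`; consequently `L_τ(P)` satisfies
`[L_τ(P), L_τ(P)] = 0` exactly when `[L_τ²(P), P] = 0`. -/
theorem schouten_second_lie_deriv_add {n : ℕ} (hn : 1 ≤ n)
    (P : (Fin n → ℝ) → Matrix (Fin n) (Fin n) ℝ) (hP : IsPoisson P)
    (τ : (Fin n → ℝ) → (Fin n → ℝ)) (hτ : IsVectorField τ) :
    (∀ x i j k, schouten (lieD τ (lieD τ P)) P x i j k
        + schouten (lieD τ P) (lieD τ P) x i j k = 0) ∧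
      ((∀ x i j k, schouten (lieD τ P) (lieD τ P) x i j k = 0) ↔
        (∀ x i j k, schouten (lieD τ (lieD τ P)) P x i j k = 0)) := by
  obtain ⟨⟨hPs, hPa⟩, hPP⟩ := hP
  have hτ' : ∀ i, ContDiff ℝ (⊤:ℕ∞) fun x => τ x i := fun i => hτ i
  have hLs : ∀ i j, ContDiff ℝ (⊤:ℕ∞) fun x => lieD τ P x i j :=
    fun i j => SchoutenAux.contDiff_lieD hPs hτ' i j
  have hLa : ∀ x, (lieD τ P x)ᵀ = -(lieD τ P x) := fun x => SchoutenAux.antisym_lieD hPa x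
  have hsymm : ∀ (A B : (Fin n → ℝ) → Matrix (Fin n) (Fin n) ℝ) x i j k,
      schouten A B x i j k = schouten B A x i j k := by
    intro A B x i j k
    unfold schouten
    rw [neg_inj]
    exact Finset.sum_congr rfl fun m _ => by ring
  have hz : ∀ x i j k, schouten (lieD τ P) P x i j k = 0 := by
    intro x i j k
    have h := SchoutenAux.leibniz hPs hPa hPs hPa hτ' x i j k
    have hzfun : (fun y => schouten P P y i j k) = (fun _ => (0:ℝ)) :=
      funext fun y => hPP y i j k
    simp only [hzfun, SchoutenAux.pd_const, hPP, mul_zero, zero_mul, sub_zero, zero_sub,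
      add_zero, zero_add, neg_zero, Finset.sum_const_zero] at h
    have h2 := hsymm P (lieD τ P) x i j k
    linarith [h, h2]
  have key : ∀ x i j k, schouten (lieD τ (lieD τ P)) P x i j k
      + schouten (lieD τ P) (lieD τ P) x i j k = 0 := by
    intro x i j k
    have h := SchoutenAux.leibniz hLs hLa hPs hPa hτ' x i j k
    have hzfun : (fun y => schouten (lieD τ P) P y i j k) = (fun _ => (0:ℝ)) :=
      funext fun y => hz y i j k
    simp only [hzfun, SchoutenAux.pd_const, hz, mul_zero, zero_mul, sub_zero, zero_sub,
      add_zero, zero_add, neg_zero, Finset.sum_const_zero] at h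
    linarith [h]
  refine ⟨key, ?_, ?_⟩
  · intro h0 x i j k
    have h1 := key x i j k
    have h2 := h0 x i j k
    linarith
  · intro h0 x i j k
    have h1 := key x i j k
    have h2 := h0 x i j k
    linarith
end
end
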